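/- arXiv:1808.03537 — 2 statements merged into one kernel-verified Lean document; each statement's English description precedes it below -/
import Mathlib

section
/- The Moore–Penrose pseudoinverse of a Kronecker product is the Kronecker product of the pseudoinverses: (A ⊗ B)^+ = A^+ ⊗ B^+. -/
open Matrix Kronecker

/-- `B` is the Moore–Penrose pseudoinverse of `A`. -/
def IsMoorePenrose {m n : Type*} [Fintype m] [Fintype n]
    (A : Matrix m n ℝ) (B : Matrix n m ℝ) : Prop :=
  A * B * A = A ∧ B * A * B = B ∧ (A * B)ᵀ = A * B ∧ (B * A)ᵀ = B * A

theorem isMoorePenrose_unique {m n : Type*} [Fintype m] [Fintype n]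
    (A : Matrix m n ℝ) (B C : Matrix n m ℝ)
    (hB : IsMoorePenrose A B) (hC : IsMoorePenrose A C) : B = C := by
  obtain ⟨hB1, hB2, hB3, hB4⟩ := hB
  obtain ⟨hC1, hC2, hC3, hC4⟩ := hC
  have hAB : A * B = A * C := by
    calc A * B = (A * B)ᵀ := hB3.symm
    _ = (A * C * (A * B))ᵀ := by simp only [← Matrix.mul_assoc, hC1]
    _ = (A * B)ᵀ * (A * C)ᵀ := by rw [Matrix.transpose_mul]
    _ = A * B * (A * C) := by rw [hB3, hC3]
    _ = A * C := by simp only [← Matrix.mul_assoc, hB1]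
  have hBA : B * A = C * A := by
    calc B * A = (B * A)ᵀ := hB4.symm
    _ = (B * A * (C * A))ᵀ := by rw [Matrix.mul_assoc, ← Matrix.mul_assoc A C A, hC1]
    _ = (C * A)ᵀ * (B * A)ᵀ := by rw [Matrix.transpose_mul]
    _ = C * A * (B * A) := by rw [hB4, hC4]
    _ = C * A := by rw [Matrix.mul_assoc, ← Matrix.mul_assoc A B A, hB1]
  calc B = B * A * B := hB2.symm
  _ = B * (A * C) := by rw [Matrix.mul_assoc, hAB]
  _ = C * A * C := by rw [← Matrix.mul_assoc, hBA]
  _ = C := hC2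

/-- The pseudoinverse of a Kronecker product is the Kronecker product of the
pseudoinverses: `(A ⊗ B)⁺ = A⁺ ⊗ B⁺`. -/
theorem pinv_kronecker {m n m' n' : Type*} [Fintype m] [Fintype n] [Fintype m'] [Fintype n']
    (A : Matrix m n ℝ) (Ap : Matrix n m ℝ) (B : Matrix m' n' ℝ) (Bp : Matrix n' m' ℝ)
    (C : Matrix (n × n') (m × m') ℝ)
    (hA : IsMoorePenrose A Ap) (hB : IsMoorePenrose B Bp)
    (hC : IsMoorePenrose (A ⊗ₖ B) C) :
    C = Ap ⊗ₖ Bp := by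
  obtain ⟨hA1, hA2, hA3, hA4⟩ := hA
  obtain ⟨hB1, hB2, hB3, hB4⟩ := hB
  refine isMoorePenrose_unique (A ⊗ₖ B) C (Ap ⊗ₖ Bp) hC ⟨?_, ?_, ?_, ?_⟩
  · rw [← mul_kronecker_mul, ← mul_kronecker_mul, hA1, hB1]
  · rw [← mul_kronecker_mul, ← mul_kronecker_mul, hA2, hB2]
  · rw [← mul_kronecker_mul, ← kroneckerMap_transpose, hA3, hB3]
  · rw [← mul_kronecker_mul, ← kroneckerMap_transpose, hA4, hB4]
end

section
/- Closure of the marginals Gram matrix family under multiplication: with C(a) as above and G(v) = Σ_{a∈{0,1}^d} v_a C(a) for v ∈ R^{2^d}, for every u, v there exists w ∈ R^{2^d} with G(u)G(v) = G(w), given by w_k = Σ_{a,b : a∧b = k} u_a v_b c(a∨b). Moreover w depends linearly on v, i.e., w = X(u) v where X(u)[k,b] = Σ_{a : a∧b = k} u_a c(a∨b). -/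
/-! `C(a)` is the Kronecker product over the coordinates of the factors `Mᵢ(aᵢ)`, and Kronecker
products multiply factorwise. Coordinatewise `J * J = nᵢ • J`, `J * I = I * J = J` and `I * I = I`,
so `C(a) * C(b) = c(a ∨ b) • C(a ∧ b)`. Expanding `G(u) * G(v)` bilinearly and collecting the
terms with `a ∧ b = k` gives `G(w)`. -/

open Matrix

variable {d : ℕ}

/-- `C(a) = ⊗ᵢ Mᵢ(aᵢ)` where `Mᵢ(0) = J` (all-ones) and `Mᵢ(1) = I`. -/
def margGram (n : Fin d → ℕ) (a : Fin d → Bool) :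
    Matrix (∀ i, Fin (n i)) (∀ i, Fin (n i)) ℝ :=
  Matrix.of fun r c => ∏ i, if a i then (if r i = c i then (1 : ℝ) else 0) else 1

/-- `c(k) = ∏ᵢ (nᵢ if kᵢ = 0 else 1)`. -/
def margConst (n : Fin d → ℕ) (k : Fin d → Bool) : ℝ :=
  ∏ i, if k i then 1 else (n i : ℝ)

/-- `G(v) = Σ_a v_a C(a)`. -/
def margG (n : Fin d → ℕ) (v : (Fin d → Bool) → ℝ) :
    Matrix (∀ i, Fin (n i)) (∀ i, Fin (n i)) ℝ :=
  ∑ a, v a • margGram n a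

/-- The matrix `X(u)` with `X(u)[k,b] = Σ_{a : a∧b = k} u_a c(a∨b)`. -/
def margX (n : Fin d → ℕ) (u : (Fin d → Bool) → ℝ) :
    Matrix (Fin d → Bool) (Fin d → Bool) ℝ :=
  Matrix.of fun k b =>
    ∑ a, if (fun i => a i && b i) = k then u a * margConst n (fun i => a i || b i) else 0

namespace Matrix

variable {ι R : Type*} [Fintype ι] [CommSemiring R] {l m p : ι → Type*}

def piKron (A : ∀ i, Matrix (l i) (m i) R) : Matrix (∀ i, l i) (∀ i, m i) R :=
  of fun r c => ∏ i, A i (r i) (c i)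

theorem piKron_smul (s : ι → R) (A : ∀ i, Matrix (l i) (m i) R) :
    piKron (fun i => s i • A i) = (∏ i, s i) • piKron A := by
  ext r c
  simp only [piKron, of_apply, smul_apply, smul_eq_mul, Finset.prod_mul_distrib]

theorem piKron_mul [DecidableEq ι] [∀ i, Fintype (m i)]
    (A : ∀ i, Matrix (l i) (m i) R) (B : ∀ i, Matrix (m i) (p i) R) :
    piKron A * piKron B = piKron fun i => A i * B i := by
  ext r c
  simp only [piKron, mul_apply, of_apply, ← Finset.prod_mul_distrib, Fintype.prod_sum]

theorem of_one_mul_of_one {l m p R : Type*} [Fintype m] [Semiring R] :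
    (of fun _ _ => 1 : Matrix l m R) * (of fun _ _ => 1 : Matrix m p R)
      = (Fintype.card m : R) • of fun _ _ => 1 := by
  ext r c
  simp [mul_apply]

end Matrix

def margFactor (n : Fin d → ℕ) (a : Fin d → Bool) (i : Fin d) :
    Matrix (Fin (n i)) (Fin (n i)) ℝ :=
  if a i then 1 else of fun _ _ => 1

theorem margGram_eq_piKron (n : Fin d → ℕ) (a : Fin d → Bool) :
    margGram n a = piKron (margFactor n a) := by
  ext r c
  simp only [margGram, piKron, margFactor, of_apply]
  refine Finset.prod_congr rfl fun i _ => ?_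
  split_ifs <;> simp [one_apply, *]

theorem margFactor_mul (n : Fin d → ℕ) (a b : Fin d → Bool) (i : Fin d) :
    margFactor n a i * margFactor n b i
      = (if a i || b i then 1 else (n i : ℝ)) • margFactor n (fun i => a i && b i) i := by
  cases ha : a i <;> cases hb : b i <;> simp [margFactor, ha, hb, of_one_mul_of_one]

theorem margGram_mul (n : Fin d → ℕ) (a b : Fin d → Bool) :
    margGram n a * margGram n b
      = margConst n (fun i => a i || b i) • margGram n (fun i => a i && b i) := by
  simp only [margGram_eq_piKron, piKron_mul, margFactor_mul, piKron_smul, margConst]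

theorem margG_mul_eq_sum (n : Fin d → ℕ) (u v : (Fin d → Bool) → ℝ) :
    margG n u * margG n v
      = ∑ a, ∑ b, (u a * v b * margConst n (fun i => a i || b i))
          • margGram n (fun i => a i && b i) := by
  simp only [margG, Finset.sum_mul_sum, smul_mul_smul_comm, margGram_mul, smul_smul]

theorem margG_sum_sum_ite_eq {α β : Type*} [Fintype α] [Fintype β] (n : Fin d → ℕ)
    (f : α → β → Fin d → Bool) (g : α → β → ℝ) :
    margG n (fun k => ∑ a, ∑ b, if f a b = k then g a b else 0)
      = ∑ a, ∑ b, g a b • margGram n (f a b) := by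
  simp only [margG, Finset.sum_smul, ite_smul, zero_smul]
  rw [Finset.sum_comm]
  refine Finset.sum_congr rfl fun a _ => ?_
  rw [Finset.sum_comm]
  simp

theorem margX_mulVec (n : Fin d → ℕ) (u v : (Fin d → Bool) → ℝ) :
    margX n u *ᵥ v = fun k => ∑ a, ∑ b,
      if (fun i => a i && b i) = k then u a * v b * margConst n (fun i => a i || b i) else 0 := by
  ext k
  simp only [mulVec, dotProduct, margX, of_apply, Finset.sum_mul, ite_mul, zero_mul]
  rw [Finset.sum_comm]
  refine Finset.sum_congr rfl fun a _ => Finset.sum_congr rfl fun b _ => ?_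
  congr 1
  ring

/-- Closure of the marginals Gram family under multiplication:
`G(u)G(v) = G(w)` with `w_k = Σ_{a∧b=k} u_a v_b c(a∨b)`, and `w = X(u) v`. -/
theorem margG_mul (n : Fin d → ℕ) (u v : (Fin d → Bool) → ℝ) :
    margG n u * margG n v
      = margG n (fun k => ∑ a, ∑ b,
          if (fun i => a i && b i) = k then u a * v b * margConst n (fun i => a i || b i) else 0)
      ∧ margG n u * margG n v = margG n (margX n u *ᵥ v) := by
  rw [margX_mulVec, margG_sum_sum_ite_eq, margG_mul_eq_sum]
  exact ⟨rfl, rfl⟩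
end
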